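/- arXiv:math/0301291 — 2 statements merged into one kernel-verified Lean document; each statement's English description precedes it below -/
import Mathlib

section
/- Let E be a countable set and let S ≤ T be closed subspaces of ℓ²(E). For every finite subset B ⊆ E, the determinant of the Gram-type matrix [⟨P_S(χ^e), χ^f⟩]_{e,f ∈ B} is at most the determinant of [⟨P_T(χ^e), χ^f⟩]_{e,f ∈ B}, where P_S, P_T denote orthogonal projections and χ^e is the indicator function of e. -/
/-!
The matrices in question are compressions `[⟪P x_e, x_f⟫]` of orthogonal projections `P` to the
vectors `x_e = χ^e`. Since `P` is a self-adjoint idempotent, `⟪P x_e, x_f⟫ = ⟪P x_e, P x_f⟫`, so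
such a compression is a Gram matrix and hence positive semidefinite. For `S ≤ T` the difference
`P_T - P_S` is again an orthogonal projection, so the matrix for `T` is that for `S` plus a
positive semidefinite matrix, and the determinant is monotone for this (Loewner) order.
-/

open scoped InnerProductSpace ComplexOrder MatrixOrder

namespace Matrix

variable {n 𝕜 : Type*} [Fintype n] [DecidableEq n] [RCLike 𝕜]

theorem PosSemidef.one_le_det_one_add {M : Matrix n n 𝕜} (hM : M.PosSemidef) :
    1 ≤ (1 + M).det := by
  have hM1 : (1 + M).IsHermitian := isHermitian_one.add hM.isHermitian
  rw [hM1.det_eq_prod_eigenvalues, ← RCLike.ofReal_prod, ← RCLike.ofReal_one,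
    RCLike.ofReal_le_ofReal]
  refine Finset.one_le_prod fun i _ => ?_
  set v := hM1.eigenvectorBasis i
  have hv : star ⇑v ⬝ᵥ ⇑v = 1 := by
    rw [dotProduct_comm, ← EuclideanSpace.inner_eq_star_dotProduct, inner_self_eq_norm_sq_to_K,
      hM1.eigenvectorBasis.orthonormal.1 i]
    simp
  -- each eigenvalue of `1 + M` is a Rayleigh quotient `1 + v⋆ M v ≥ 1`
  rw [hM1.eigenvalues_eq, add_mulVec, one_mulVec, dotProduct_add, hv, map_add, RCLike.one_re]
  exact le_add_of_nonneg_right (hM.re_dotProduct_nonneg _)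

theorem PosSemidef.det_le_det_add {A B : Matrix n n 𝕜} (hA : A.PosSemidef) (hB : B.PosSemidef) :
    A.det ≤ (A + B).det := by
  by_cases hA0 : A.det = 0
  · exact hA0 ▸ (hA.add hB).det_nonneg
  obtain ⟨R, rfl⟩ := CStarAlgebra.nonneg_iff_eq_star_mul_self.mp hA.nonneg
  rw [star_eq_conjTranspose] at hA0 ⊢
  have hR : IsUnit R.det := isUnit_iff_ne_zero.mpr (right_ne_zero_of_mul (det_mul Rᴴ R ▸ hA0))
  have hconj : Rᴴ * R + B = Rᴴ * (1 + (R⁻¹)ᴴ * B * R⁻¹) * R := by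
    rw [mul_add, add_mul, mul_one, ← mul_assoc, ← mul_assoc, ← conjTranspose_mul,
      nonsing_inv_mul R hR, conjTranspose_one, one_mul, mul_assoc, nonsing_inv_mul R hR, mul_one]
  calc (Rᴴ * R).det ≤ (1 + (R⁻¹)ᴴ * B * R⁻¹).det * (Rᴴ * R).det :=
        le_mul_of_one_le_left hA.det_nonneg (hB.conjTranspose_mul_mul_same _).one_le_det_one_add
    _ = (Rᴴ * R + B).det := by
        rw [hconj, det_mul, det_mul, det_mul]; ring

end Matrix

namespace IsStarProjection

variable {𝕜 H : Type*} [RCLike 𝕜] [NormedAddCommGroup H] [InnerProductSpace 𝕜 H] [CompleteSpace H]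
  {p : H →L[𝕜] H}

theorem inner_apply_eq_inner_apply_apply (hp : IsStarProjection p) (x y : H) :
    ⟪p x, y⟫_𝕜 = ⟪p x, p y⟫_𝕜 := by
  rw [← ContinuousLinearMap.adjoint_inner_left, ← ContinuousLinearMap.star_eq_adjoint,
    hp.isSelfAdjoint.star_eq, ← mul_apply_eq_comp, hp.isIdempotentElem.eq]

theorem posSemidef_of_inner_apply {n : Type*} [Finite n] (hp : IsStarProjection p) (v : n → H) :
    (Matrix.of fun i j => ⟪p (v i), v j⟫_𝕜).PosSemidef := by
  convert Matrix.posSemidef_gram 𝕜 (p ∘ v) using 1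
  ext i j
  exact hp.inner_apply_eq_inner_apply_apply (v i) (v j)

end IsStarProjection

theorem det_gram_mono_general {E : Type*} [DecidableEq E]
    (S T : Submodule ℝ (lp (fun _ : E => ℝ) 2))
    [S.HasOrthogonalProjection] [T.HasOrthogonalProjection]
    (hST : S ≤ T) (B : Finset E) :
    (Matrix.of fun e f : B =>
        ⟪((S.orthogonalProjectionOnto (lp.single 2 (e : E) 1) : lp (fun _ : E => ℝ) 2)),
          lp.single 2 (f : E) 1⟫_ℝ).det ≤
    (Matrix.of fun e f : B =>
        ⟪((T.orthogonalProjectionOnto (lp.single 2 (e : E) 1) : lp (fun _ : E => ℝ) 2)),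
          lp.single 2 (f : E) 1⟫_ℝ).det := by
  let χ : B → lp (fun _ : E => ℝ) 2 := fun e => lp.single 2 (e : E) 1
  have hS : IsStarProjection S.starProjection := isStarProjection_starProjection
  have hTS : IsStarProjection (T.starProjection - S.starProjection) :=
    hS.sub_of_mul_eq_left isStarProjection_starProjection
      (Submodule.starProjection_comp_starProjection_of_le hST)
  have hsum : (Matrix.of fun e f => ⟪S.starProjection (χ e), χ f⟫_ℝ) +
      (Matrix.of fun e f => ⟪(T.starProjection - S.starProjection) (χ e), χ f⟫_ℝ) =
      Matrix.of fun e f => ⟪T.starProjection (χ e), χ f⟫_ℝ := by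
    ext e f
    simp [inner_sub_left]
  exact hsum ▸ (hS.posSemidef_of_inner_apply χ).det_le_det_add (hTS.posSemidef_of_inner_apply χ)

/-- Monotonicity of determinantal cylinder probabilities: if `S ≤ T` are closed subspaces of
`ℓ²(E)`, then for every finite `B ⊆ E` the Gram determinant of the compression of the
orthogonal projection onto `S` is at most that for `T`. -/
theorem det_gram_mono {E : Type*} [Countable E] [DecidableEq E]
    (S T : Submodule ℝ (lp (fun _ : E => ℝ) 2))
    [S.HasOrthogonalProjection] [T.HasOrthogonalProjection]
    (hST : S ≤ T) (B : Finset E) :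
    (Matrix.of fun e f : B =>
        ⟪((S.orthogonalProjectionOnto (lp.single 2 (e : E) 1) : lp (fun _ : E => ℝ) 2)),
          lp.single 2 (f : E) 1⟫_ℝ).det ≤
    (Matrix.of fun e f : B =>
        ⟪((T.orthogonalProjectionOnto (lp.single 2 (e : E) 1) : lp (fun _ : E => ℝ) 2)),
          lp.single 2 (f : E) 1⟫_ℝ).det :=
  det_gram_mono_general S T hST B
end

section
/- Let Γ be a connected locally finite graph. A function θ ∈ ℓ²_-(Γ) is orthogonal to the closed span ◇ of all cycles if and only if θ is a gradient: there exists a function F on the vertices with θ(e) = F(head(e)) − F(tail(e)) for every directed edge e. -/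
/-!
Since `θ` is antisymmetric, `⟪χ^d, θ⟫ = θ d - θ ď = 2 θ d`, so pairing a cycle with `θ` gives twice
the sum of `θ` around it, and `θ` is orthogonal to the closed span of the cycles iff it is
orthogonal to each cycle. A gradient telescopes to zero around every cycle. Conversely, if `θ` sums
to zero around every closed walk, its sum along any walk from a fixed base vertex depends only on
the endpoint; connectedness makes this a potential defined everywhere.
-/

open scoped InnerProductSpace

variable {V : Type*}

/-- The unit flow `χ^d = 1_d - 1_{ď}` along a dart `d`, as an element of `ℓ²` of the darts. -/
noncomputable def chi (Γ : SimpleGraph V) (d : Γ.Dart) : lp (fun _ : Γ.Dart => ℝ) 2 :=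
  letI := Classical.decEq Γ.Dart
  lp.single 2 d 1 - lp.single 2 d.symm 1

/-- The set of cycles: sums `Σ_{i=1}^k χ^{e_i}` over closed sequences of concatenating darts. -/
def cycleSet (Γ : SimpleGraph V) : Set (lp (fun _ : Γ.Dart => ℝ) 2) :=
  {c | ∃ (k : ℕ) (_ : 0 < k) (e : Fin k → Γ.Dart),
    (∀ i : Fin k, (e i).snd = (e (⟨(i + 1) % k, Nat.mod_lt _ ‹0 < k›⟩ : Fin k)).fst) ∧
    c = ∑ i : Fin k, chi Γ (e i)}

namespace SimpleGraph.Walk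

variable {β : Type*} {G : SimpleGraph V}

def dartSum [AddCommMonoid β] (f : G.Dart → β) {u v : V} (p : G.Walk u v) : β :=
  (p.darts.map f).sum

section AddCommMonoid

variable [AddCommMonoid β] (f : G.Dart → β)

@[simp]
lemma dartSum_append {u v w : V} (p : G.Walk u v) (q : G.Walk v w) :
    (p.append q).dartSum f = p.dartSum f + q.dartSum f := by
  simp [dartSum]

@[simp]
lemma dartSum_concat {u v w : V} (p : G.Walk u v) (h : G.Adj v w) :
    (p.concat h).dartSum f = p.dartSum f + f ⟨(v, w), h⟩ := by
  simp [dartSum, darts_concat]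

lemma dartSum_eq_sum_get {u v : V} (p : G.Walk u v) :
    p.dartSum f = ∑ i : Fin p.darts.length, f (p.darts.get i) := by
  conv_lhs => rw [dartSum, ← List.ofFn_get p.darts, List.map_ofFn, List.sum_ofFn]
  rfl

end AddCommMonoid

lemma dartSum_reverse [AddCommGroup β] {f : G.Dart → β} (hf : ∀ d, f d.symm = -f d) {u v : V}
    (p : G.Walk u v) : p.reverse.dartSum f = -p.dartSum f := by
  induction p with
  | nil => simp [dartSum]
  | cons h q ih =>
    rw [reverse_cons, dartSum_append, ih]
    simpa [dartSum, add_comm] using hf ⟨(_, _), h⟩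

lemma snd_darts_get_eq_fst_darts_get_succ {v : V}
    (p : G.Walk v v) (hp : 0 < p.darts.length) (i : Fin p.darts.length) :
    (p.darts.get i).snd = (p.darts.get ⟨(i + 1) % p.darts.length, Nat.mod_lt _ hp⟩).fst := by
  simp only [List.get_eq_getElem, darts_getElem_eq_getVert, length_darts]
  have hi : (i : ℕ) + 1 ≤ p.length := p.length_darts ▸ i.isLt
  rcases hi.lt_or_eq with hlt | heq
  · rw [Nat.mod_eq_of_lt hlt]
  · rw [heq, Nat.mod_self, getVert_length, getVert_zero]

end SimpleGraph.Walk

open SimpleGraph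

lemma SimpleGraph.Connected.exists_potential_of_dartSum_eq_zero {β : Type*}
    [AddCommGroup β] {G : SimpleGraph V} (hG : G.Connected) {f : G.Dart → β}
    (hf : ∀ d, f d.symm = -f d) (hclosed : ∀ v (p : G.Walk v v), p.dartSum f = 0) :
    ∃ F : V → β, ∀ d : G.Dart, f d = F d.snd - F d.fst := by
  obtain ⟨v₀⟩ := hG.nonempty
  let path (v : V) : G.Walk v₀ v := (hG.preconnected v₀ v).some
  refine ⟨fun v => (path v).dartSum f, fun d => ?_⟩
  have := hclosed v₀ (((path d.fst).concat d.adj).append (path d.snd).reverse)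
  rw [Walk.dartSum_append, Walk.dartSum_concat, Walk.dartSum_reverse hf] at this
  rw [← sub_eq_zero, ← this]
  abel

lemma Fin.mk_add_one_mod_eq_finRotate {k : ℕ} (hk : 0 < k) (i : Fin k) :
    (⟨(i + 1) % k, Nat.mod_lt _ hk⟩ : Fin k) = finRotate k i := by
  have : NeZero k := ⟨hk.ne'⟩
  rw [finRotate_apply]
  ext
  simp [Fin.val_add]

lemma sum_sub_eq_zero_of_cyclic {β : Type*} [AddCommGroup β] {G : SimpleGraph V} {k : ℕ}
    (hk : 0 < k) {e : Fin k → G.Dart}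
    (he : ∀ i : Fin k, (e i).snd = (e ⟨(i + 1) % k, Nat.mod_lt _ hk⟩).fst) (F : V → β) :
    ∑ i, (F (e i).snd - F (e i).fst) = 0 := by
  simp_rw [he, Fin.mk_add_one_mod_eq_finRotate hk]
  rw [Finset.sum_sub_distrib, Equiv.sum_comp (finRotate k) (fun i => F (e i).fst), sub_self]

lemma SimpleGraph.Walk.sum_chi_darts_mem_cycleSet {Γ : SimpleGraph V} {v : V} (p : Γ.Walk v v)
    (hp : 0 < p.darts.length) : ∑ i, chi Γ (p.darts.get i) ∈ cycleSet Γ :=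
  ⟨_, hp, _, p.snd_darts_get_eq_fst_darts_get_succ hp, rfl⟩

lemma inner_chi_left (Γ : SimpleGraph V) (d : Γ.Dart) (θ : lp (fun _ : Γ.Dart => ℝ) 2) :
    ⟪chi Γ d, θ⟫_ℝ = θ d - θ d.symm := by
  classical
  simp [chi, inner_sub_left, lp.inner_single_left]

lemma inner_chi_left_of_antisymm {Γ : SimpleGraph V} {θ : lp (fun _ : Γ.Dart => ℝ) 2}
    (hθ : ∀ d : Γ.Dart, θ d.symm = -θ d) (d : Γ.Dart) : ⟪chi Γ d, θ⟫_ℝ = 2 * θ d := by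
  rw [inner_chi_left, hθ]
  ring

lemma mem_orthogonal_span_iff {𝕜 E : Type*} [RCLike 𝕜] [NormedAddCommGroup E]
    [InnerProductSpace 𝕜 E] {s : Set E} {x : E} :
    x ∈ (Submodule.span 𝕜 s)ᗮ ↔ ∀ c ∈ s, ⟪c, x⟫_𝕜 = 0 := by
  refine ⟨fun h c hc => h c (Submodule.subset_span hc), fun h c hc => ?_⟩
  have hspan : Submodule.span 𝕜 s ≤ (𝕜 ∙ x)ᗮ := Submodule.span_le.2 fun c hc =>
    Submodule.mem_orthogonal_singleton_iff_inner_left.2 (h c hc)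
  exact Submodule.mem_orthogonal_singleton_iff_inner_left.1 (hspan hc)

theorem orthogonal_cycles_iff_gradient_general (Γ : SimpleGraph V) (hconn : Γ.Connected)
    (θ : lp (fun _ : Γ.Dart => ℝ) 2) (hθ : ∀ d : Γ.Dart, θ d.symm = -θ d) :
    θ ∈ ((Submodule.span ℝ (cycleSet Γ)).topologicalClosure)ᗮ ↔
      ∃ F : V → ℝ, ∀ d : Γ.Dart, θ d = F d.snd - F d.fst := by
  rw [Submodule.orthogonal_closure, mem_orthogonal_span_iff]
  have inner_cycle {k : ℕ} (e : Fin k → Γ.Dart) :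
      ⟪∑ i, chi Γ (e i), θ⟫_ℝ = 2 * ∑ i, θ (e i) := by
    simp_rw [sum_inner, inner_chi_left_of_antisymm hθ, Finset.mul_sum]
  constructor
  · intro h
    refine hconn.exists_potential_of_dartSum_eq_zero hθ fun v p => ?_
    rcases Nat.eq_zero_or_pos p.darts.length with hp | hp
    · simp [Walk.dartSum, List.eq_nil_of_length_eq_zero hp]
    · have hcycle := h _ (p.sum_chi_darts_mem_cycleSet hp)
      rw [inner_cycle] at hcycle
      rw [Walk.dartSum_eq_sum_get]
      linarith
  · rintro ⟨F, hF⟩ c ⟨k, hk, e, he, rfl⟩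
    simp_rw [inner_cycle, hF, sum_sub_eq_zero_of_cyclic hk he, mul_zero]

/-- For a connected locally finite graph, an antisymmetric `ℓ²` function `θ` is orthogonal to
the closed span of the cycles iff it is the gradient of some vertex function `F`. -/
theorem orthogonal_cycles_iff_gradient (Γ : SimpleGraph V) (hconn : Γ.Connected)
    (hlf : ∀ v : V, (Γ.neighborSet v).Finite) [Countable V]
    (θ : lp (fun _ : Γ.Dart => ℝ) 2) (hθ : ∀ d : Γ.Dart, θ d.symm = -θ d) :
    θ ∈ ((Submodule.span ℝ (cycleSet Γ)).topologicalClosure)ᗮ ↔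
      ∃ F : V → ℝ, ∀ d : Γ.Dart, θ d = F d.snd - F d.fst :=
  orthogonal_cycles_iff_gradient_general Γ hconn θ hθ
end
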